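/- arXiv:2204.05709 — 4 statements merged into one kernel-verified Lean document; each statement's English description precedes it below -/
import Mathlib

section
/- Let ν and ν' be probability measures on a measurable space with ν absolutely continuous with respect to ν', and let f be a measurable ℝ^d-valued function that is integrable with respect to both ν and ν'. Then ‖∫ f dν − ∫ f dν'‖² ≤ 2 (1 + log ∫ e^{‖f‖²} dν') · H(ν | ν'), where the right-hand side is interpreted as +∞ if ∫ e^{‖f‖²} dν' = +∞ or H(ν | ν') = +∞. -/
/-!
Write `ρ = dν/dν'`, so that `∫ f dν - ∫ f dν' = ∫ (ρ - 1) f dν'` and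
`H = H(ν | ν') = ∫ klFun ρ dν'` with `klFun x = x log x + 1 - x`. Cauchy–Schwarz with the weight
`ρ + 2` bounds the squared norm of the difference by `P · Q`, where
`P = ∫ (ρ - 1)² / (ρ + 2) dν'` and `Q = ∫ (ρ + 2) ‖f‖² dν'`. The pointwise inequality
`3 (x - 1)² ≤ 2 (x + 2) klFun x` gives `P ≤ 2 H / 3`, and trivially `P ≤ 2`. The Donsker–Varadhan
inequality `∫ ρ g dν' ≤ H + log ∫ e^g dν'`, a consequence of Young's inequality
`a b ≤ klFun a + e^b - 1`, applied to `ρ` and to `1` with `g = ‖f‖²`, gives `Q ≤ H + 3 L` with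
`L = log ∫ e^{‖f‖²} dν'`. Finally `min 2 (2 H / 3) · (H + 3 L) ≤ 2 (1 + L) H`.
-/

open MeasureTheory ProbabilityTheory Real InformationTheory Set

lemma isMinOn_Ioi_one_of_hasDerivAt {F F' : ℝ → ℝ} (hF : ∀ x, 0 < x → HasDerivAt F (F' x) x)
    (hF' : ∀ x, 0 < x → 0 ≤ (x - 1) * F' x) : IsMinOn F (Ioi 0) 1 := by
  have hcont : ∀ {a b : ℝ}, 0 < a → ContinuousOn F (Icc a b) := fun ha y hy =>
    (hF y (ha.trans_le hy.1)).continuousAt.continuousWithinAt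
  have hderiv : ∀ {a b : ℝ}, 0 < a → ∀ y ∈ interior (Icc a b),
      HasDerivWithinAt F (F' y) (interior (Icc a b)) y := fun ha y hy => by
    rw [interior_Icc] at hy
    exact (hF y (ha.trans hy.1)).hasDerivWithinAt
  intro x (hx : 0 < x)
  rcases le_total 1 x with h1x | hx1
  · refine monotoneOn_of_hasDerivWithinAt_nonneg (convex_Icc 1 x) (hcont one_pos)
      (hderiv one_pos) (fun y hy => ?_) ⟨le_rfl, h1x⟩ ⟨h1x, le_rfl⟩ h1x
    rw [interior_Icc] at hy
    exact nonneg_of_mul_nonneg_right (hF' y (by linarith [hy.1])) (by linarith [hy.1])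
  · refine antitoneOn_of_hasDerivWithinAt_nonpos (convex_Icc x 1) (hcont hx)
      (hderiv hx) (fun y hy => ?_) ⟨le_rfl, hx1⟩ ⟨hx1, le_rfl⟩ hx1
    rw [interior_Icc] at hy
    have := hF' y (hx.trans hy.1)
    nlinarith [hy.2]

lemma sub_one_mul_log_sub_two_mul_nonneg {x : ℝ} (hx : 0 < x) :
    0 ≤ (x - 1) * ((x + 1) * log x - 2 * (x - 1)) := by
  set k : ℝ → ℝ := fun x => (x + 1) * log x - 2 * (x - 1)
  have hk : ∀ y, 0 < y → HasDerivAt k (log y + y⁻¹ - 1) y := fun y hy => by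
    have := (((hasDerivAt_id y).add_const 1).mul (hasDerivAt_log hy.ne')).sub
      (((hasDerivAt_id y).sub_const 1).const_mul 2)
    refine this.congr_deriv ?_
    simp only [id]
    field_simp
    ring
  have hmono : MonotoneOn k (Ioi 0) := by
    refine monotoneOn_of_hasDerivWithinAt_nonneg (convex_Ioi 0)
      (fun y hy => (hk y hy).continuousAt.continuousWithinAt)
      (fun y hy => (hk y (by rwa [interior_Ioi] at hy)).hasDerivWithinAt) fun y hy => ?_
    rw [interior_Ioi] at hy
    have := log_le_sub_one_of_pos (inv_pos.mpr hy)
    rw [log_inv] at this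
    linarith
  have hk1 : k 1 = 0 := by simp [k]
  rcases le_total 1 x with h1x | hx1
  · exact mul_nonneg (by linarith) (hk1 ▸ hmono (mem_Ioi.mpr one_pos) hx h1x)
  · exact mul_nonneg_of_nonpos_of_nonpos (by linarith)
      (hk1 ▸ hmono hx (mem_Ioi.mpr one_pos) hx1)

lemma sq_sub_one_div_add_two_le_klFun {x : ℝ} (hx : 0 ≤ x) :
    (x - 1) ^ 2 / (x + 2) ≤ 2 / 3 * klFun x := by
  rw [div_le_iff₀ (by linarith)]
  rcases hx.eq_or_lt with rfl | hx
  · norm_num [klFun_zero]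
  set g : ℝ → ℝ := fun x => 2 / 3 * klFun x * (x + 2) - (x - 1) ^ 2
  have hg : ∀ y, 0 < y → HasDerivAt g (4 / 3 * ((y + 1) * log y - 2 * (y - 1))) y := by
    intro y hy
    have := (((hasDerivAt_klFun hy.ne').const_mul (2 / 3)).mul
      ((hasDerivAt_id y).add_const 2)).sub (((hasDerivAt_id y).sub_const 1).pow 2)
    refine this.congr_deriv ?_
    simp only [klFun_apply, id]
    ring
  have hmin := isMinOn_Ioi_one_of_hasDerivAt hg (fun y hy => by
    nlinarith [sub_one_mul_log_sub_two_mul_nonneg hy]) (mem_Ioi.mpr hx)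
  simp only [g, klFun_one, mem_ofPred_eq] at hmin
  linarith

lemma mul_le_klFun_add_exp_sub_one {a : ℝ} (ha : 0 ≤ a) (b : ℝ) :
    a * b ≤ klFun a + (exp b - 1) := by
  rcases ha.eq_or_lt with rfl | ha
  · simp [klFun_zero, (exp_pos b).le]
  have h := mul_le_mul_of_nonneg_left (add_one_le_exp (b - log a)) ha.le
  rw [exp_sub, exp_log ha, mul_div_cancel₀ _ ha.ne'] at h
  rw [klFun_apply]
  linarith

section

variable {α : Type*} [MeasurableSpace α] {μ : Measure α}

lemma integrable_mul_of_integrable_klFun {ρ g : α → ℝ} (hρ : ∀ x, 0 ≤ ρ x) (hg : ∀ x, 0 ≤ g x)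
    (hρm : AEStronglyMeasurable ρ μ) (hgm : AEStronglyMeasurable g μ)
    (hkl : Integrable (fun x => klFun (ρ x)) μ) (hexp : Integrable (fun x => exp (g x)) μ) :
    Integrable (fun x => ρ x * g x) μ := by
  refine (hkl.add hexp).mono' (hρm.mul hgm) (ae_of_all _ fun x => ?_)
  rw [norm_of_nonneg (mul_nonneg (hρ x) (hg x)), Pi.add_apply]
  linarith [mul_le_klFun_add_exp_sub_one (hρ x) (g x)]

lemma integrable_sq_of_integrable_exp_sq {b : α → ℝ} (hbm : AEMeasurable b μ)
    (hexp : Integrable (fun x => exp (b x ^ 2)) μ) : Integrable (fun x => b x ^ 2) μ := by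
  refine hexp.mono' (hbm.pow_const 2).aestronglyMeasurable (ae_of_all _ fun x => ?_)
  rw [norm_of_nonneg (sq_nonneg _)]
  linarith [add_one_le_exp (b x ^ 2)]

lemma integral_mul_le_integral_klFun_add_log_integral_exp [IsProbabilityMeasure μ]
    {ρ g : α → ℝ} (hρ : ∀ x, 0 ≤ ρ x) (hρ1 : ∫ x, ρ x ∂μ = 1)
    (hkl : Integrable (fun x => klFun (ρ x)) μ) (hexp : Integrable (fun x => exp (g x)) μ)
    (hρg : Integrable (fun x => ρ x * g x) μ) :
    ∫ x, ρ x * g x ∂μ ≤ ∫ x, klFun (ρ x) ∂μ + log (∫ x, exp (g x) ∂μ) := by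
  set Z := ∫ x, exp (g x) ∂μ
  have hZ : 0 < Z := integral_exp_pos hexp
  have hρint : Integrable ρ μ := .of_integral_ne_zero (by simp [hρ1])
  have hpt : ∀ x, ρ x * g x - log Z * ρ x ≤ klFun (ρ x) + (exp (g x) / Z - 1) := fun x => by
    have := mul_le_klFun_add_exp_sub_one (hρ x) (g x - log Z)
    rw [exp_sub, exp_log hZ] at this
    linarith
  have hexpZ : Integrable (fun x => exp (g x) / Z - 1) μ :=
    (hexp.div_const Z).sub (integrable_const 1)
  have hmono : ∫ x, ρ x * g x - log Z * ρ x ∂μ ≤ ∫ x, klFun (ρ x) + (exp (g x) / Z - 1) ∂μ :=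
    integral_mono (hρg.sub (hρint.const_mul _)) (hkl.add hexpZ) hpt
  rw [integral_sub hρg (hρint.const_mul _), integral_const_mul, hρ1, integral_add hkl hexpZ,
    integral_sub (hexp.div_const Z) (integrable_const 1), integral_div, div_self hZ.ne'] at hmono
  simp only [integral_const, probReal_univ, smul_eq_mul, mul_one] at hmono
  linarith

lemma sq_integral_mul_le_integral_sq_mul_integral_sq {u v : α → ℝ} (hu : 0 ≤ᵐ[μ] u)
    (hv : 0 ≤ᵐ[μ] v) (hu2 : MemLp u 2 μ) (hv2 : MemLp v 2 μ) :
    (∫ x, u x * v x ∂μ) ^ 2 ≤ (∫ x, u x ^ 2 ∂μ) * ∫ x, v x ^ 2 ∂μ := by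
  have hCS := integral_mul_le_Lp_mul_Lq_of_nonneg Real.HolderConjugate.two_two hu hv
    (by simpa using hu2) (by simpa using hv2)
  simp only [rpow_two] at hCS
  have hsq : ∀ a : ℝ, 0 ≤ a → (a ^ (1 / 2 : ℝ)) ^ 2 = a := fun a ha => by
    rw [← sqrt_eq_rpow, sq_sqrt ha]
  have huv : 0 ≤ ∫ x, u x * v x ∂μ :=
    integral_nonneg_of_ae (by filter_upwards [hu, hv] with x hux hvx using mul_nonneg hux hvx)
  calc (∫ x, u x * v x ∂μ) ^ 2
      ≤ ((∫ x, u x ^ 2 ∂μ) ^ (1 / 2 : ℝ) * (∫ x, v x ^ 2 ∂μ) ^ (1 / 2 : ℝ)) ^ 2 :=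
        pow_le_pow_left₀ huv hCS 2
    _ = (∫ x, u x ^ 2 ∂μ) * ∫ x, v x ^ 2 ∂μ := by
        rw [mul_pow, hsq _ (integral_nonneg fun x => sq_nonneg _),
          hsq _ (integral_nonneg fun x => sq_nonneg _)]

lemma sq_integral_abs_mul_le_integral_div_mul_integral_mul {w a b : α → ℝ} (hw : ∀ x, 0 < w x)
    (hwm : AEMeasurable w μ) (ham : AEMeasurable a μ) (hbm : AEMeasurable b μ)
    (ha : Integrable (fun x => a x ^ 2 / w x) μ) (hb : Integrable (fun x => w x * b x ^ 2) μ) :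
    (∫ x, |a x| * |b x| ∂μ) ^ 2 ≤ (∫ x, a x ^ 2 / w x ∂μ) * ∫ x, w x * b x ^ 2 ∂μ := by
  have hu2 : ∀ x, (|a x| / √(w x)) ^ 2 = a x ^ 2 / w x := fun x => by
    rw [div_pow, sq_abs, sq_sqrt (hw x).le]
  have hv2 : ∀ x, (√(w x) * |b x|) ^ 2 = w x * b x ^ 2 := fun x => by
    rw [mul_pow, sq_abs, sq_sqrt (hw x).le]
  have huv : ∀ x, |a x| * |b x| = |a x| / √(w x) * (√(w x) * |b x|) := fun x => by
    field_simp [(sqrt_pos.mpr (hw x)).ne']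
  have hu : MemLp (fun x => |a x| / √(w x)) 2 μ :=
    (memLp_two_iff_integrable_sq (f := fun x => |a x| / √(w x))
      (ham.abs.div hwm.sqrt).aestronglyMeasurable).2 (by simpa only [hu2] using ha)
  have hv : MemLp (fun x => √(w x) * |b x|) 2 μ :=
    (memLp_two_iff_integrable_sq (f := fun x => √(w x) * |b x|)
      (hwm.sqrt.mul hbm.abs).aestronglyMeasurable).2 (by simpa only [hv2] using hb)
  simpa only [← huv, hu2, hv2] using sq_integral_mul_le_integral_sq_mul_integral_sq
    (ae_of_all _ fun x => by positivity) (ae_of_all _ fun x => by positivity) hu hv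

lemma norm_integral_sub_integral_le_integral_abs_rnDeriv_sub_one {ν : Measure α}
    [Measure.HaveLebesgueDecomposition μ ν] [SigmaFinite μ] (hμν : μ ≪ ν)
    {E : Type*} [NormedAddCommGroup E] [NormedSpace ℝ E] {f : α → E}
    (hfμ : Integrable f μ) (hfν : Integrable f ν) :
    ‖∫ x, f x ∂μ - ∫ x, f x ∂ν‖ ≤ ∫ x, |(μ.rnDeriv ν x).toReal - 1| * ‖f x‖ ∂ν := by
  rw [← integral_rnDeriv_smul hμν,
    ← integral_sub ((integrable_rnDeriv_smul_iff hμν).2 hfμ) hfν]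
  refine (norm_integral_le_integral_norm _).trans_eq
    (integral_congr_ae (ae_of_all _ fun x => ?_))
  dsimp only
  rw [← norm_eq_abs, ← norm_smul, sub_smul, one_smul]

lemma integrable_sq_sub_one_div_add_two [IsFiniteMeasure μ] {ρ : α → ℝ}
    (hρ : ∀ x, 0 ≤ ρ x) (hρint : Integrable ρ μ) :
    Integrable (fun x => (ρ x - 1) ^ 2 / (ρ x + 2)) μ := by
  have hρm := hρint.aemeasurable
  refine (hρint.add (integrable_const 1)).mono'
    (by fun_prop : AEMeasurable _ μ).aestronglyMeasurable (ae_of_all _ fun x => ?_)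
  rw [norm_of_nonneg (by have := hρ x; positivity), Pi.add_apply,
    div_le_iff₀ (by linarith [hρ x])]
  nlinarith [hρ x]

section Density

variable [IsProbabilityMeasure μ] {ρ : α → ℝ}

lemma integral_le_log_integral_exp {g : α → ℝ} (hg : Integrable g μ)
    (hexp : Integrable (fun x => exp (g x)) μ) :
    ∫ x, g x ∂μ ≤ log (∫ x, exp (g x) ∂μ) := by
  simpa [klFun_one] using integral_mul_le_integral_klFun_add_log_integral_exp (ρ := fun _ => 1)
    (fun _ => zero_le_one) (by simp) (by simp) hexp (by simpa using hg)

lemma integral_sq_sub_one_div_add_two_le_two (hρ : ∀ x, 0 ≤ ρ x) (hρ1 : ∫ x, ρ x ∂μ = 1) :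
    ∫ x, (ρ x - 1) ^ 2 / (ρ x + 2) ∂μ ≤ 2 := by
  have hρint : Integrable ρ μ := .of_integral_ne_zero (by simp [hρ1])
  have hle : ∀ x, (ρ x - 1) ^ 2 / (ρ x + 2) ≤ ρ x + 1 := fun x => by
    rw [div_le_iff₀ (by linarith [hρ x])]
    nlinarith [hρ x]
  calc ∫ x, (ρ x - 1) ^ 2 / (ρ x + 2) ∂μ ≤ ∫ x, ρ x + 1 ∂μ :=
        integral_mono (integrable_sq_sub_one_div_add_two hρ hρint)
          (hρint.add (integrable_const 1)) hle
    _ = 2 := by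
        rw [integral_add hρint (integrable_const 1), hρ1]
        norm_num

lemma integral_sq_sub_one_div_add_two_le_integral_klFun (hρ : ∀ x, 0 ≤ ρ x)
    (hρ1 : ∫ x, ρ x ∂μ = 1) (hkl : Integrable (fun x => klFun (ρ x)) μ) :
    ∫ x, (ρ x - 1) ^ 2 / (ρ x + 2) ∂μ ≤ 2 / 3 * ∫ x, klFun (ρ x) ∂μ := by
  have hρint : Integrable ρ μ := .of_integral_ne_zero (by simp [hρ1])
  rw [← integral_const_mul]
  exact integral_mono (integrable_sq_sub_one_div_add_two hρ hρint) (hkl.const_mul _)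
    fun x => sq_sub_one_div_add_two_le_klFun (hρ x)

lemma integral_add_two_mul_sq_le (hρ : ∀ x, 0 ≤ ρ x) (hρ1 : ∫ x, ρ x ∂μ = 1)
    (hkl : Integrable (fun x => klFun (ρ x)) μ) {b : α → ℝ} (hbm : AEMeasurable b μ)
    (hexp : Integrable (fun x => exp (b x ^ 2)) μ) :
    Integrable (fun x => (ρ x + 2) * b x ^ 2) μ ∧
      ∫ x, (ρ x + 2) * b x ^ 2 ∂μ ≤
        ∫ x, klFun (ρ x) ∂μ + 3 * log (∫ x, exp (b x ^ 2) ∂μ) := by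
  have hρint : Integrable ρ μ := .of_integral_ne_zero (by simp [hρ1])
  have hg := integrable_sq_of_integrable_exp_sq hbm hexp
  have hρg : Integrable (fun x => ρ x * b x ^ 2) μ :=
    integrable_mul_of_integrable_klFun hρ (fun x => sq_nonneg _) hρint.1 hg.1 hkl hexp
  have hsplit : ∀ x, ρ x * b x ^ 2 + 2 * b x ^ 2 = (ρ x + 2) * b x ^ 2 := fun x => by ring
  refine ⟨(hρg.add (hg.const_mul 2)).congr (ae_of_all _ hsplit), ?_⟩
  calc ∫ x, (ρ x + 2) * b x ^ 2 ∂μ = ∫ x, ρ x * b x ^ 2 ∂μ + 2 * ∫ x, b x ^ 2 ∂μ := by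
        rw [← integral_const_mul, ← integral_add hρg (hg.const_mul 2)]
        exact integral_congr_ae (ae_of_all _ fun x => (hsplit x).symm)
    _ ≤ (∫ x, klFun (ρ x) ∂μ + log (∫ x, exp (b x ^ 2) ∂μ)) +
          2 * log (∫ x, exp (b x ^ 2) ∂μ) :=
        add_le_add (integral_mul_le_integral_klFun_add_log_integral_exp hρ hρ1 hkl hexp hρg)
          (mul_le_mul_of_nonneg_left (integral_le_log_integral_exp hg hexp) zero_le_two)
    _ = ∫ x, klFun (ρ x) ∂μ + 3 * log (∫ x, exp (b x ^ 2) ∂μ) := by ring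

theorem sq_integral_abs_sub_one_mul_abs_le (hρ : ∀ x, 0 ≤ ρ x) (hρ1 : ∫ x, ρ x ∂μ = 1)
    (hkl : Integrable (fun x => klFun (ρ x)) μ) {b : α → ℝ} (hbm : AEMeasurable b μ)
    (hexp : Integrable (fun x => exp (b x ^ 2)) μ) :
    (∫ x, |ρ x - 1| * |b x| ∂μ) ^ 2 ≤
      2 * (1 + log (∫ x, exp (b x ^ 2) ∂μ)) * ∫ x, klFun (ρ x) ∂μ := by
  have hρint : Integrable ρ μ := .of_integral_ne_zero (by simp [hρ1])
  set K := ∫ x, klFun (ρ x) ∂μ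
  set L := log (∫ x, exp (b x ^ 2) ∂μ)
  set P := ∫ x, (ρ x - 1) ^ 2 / (ρ x + 2) ∂μ
  set Q := ∫ x, (ρ x + 2) * b x ^ 2 ∂μ
  have hK : 0 ≤ K := integral_nonneg fun x => klFun_nonneg (hρ x)
  have hL : 0 ≤ L := (integral_nonneg fun x => sq_nonneg (b x)).trans
    (integral_le_log_integral_exp (integrable_sq_of_integrable_exp_sq hbm hexp) hexp)
  have hP : 0 ≤ P := integral_nonneg fun x => by have := hρ x; positivity
  have hP2 : P ≤ 2 := integral_sq_sub_one_div_add_two_le_two hρ hρ1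
  have hPK : P ≤ 2 / 3 * K := integral_sq_sub_one_div_add_two_le_integral_klFun hρ hρ1 hkl
  obtain ⟨hQint, hQ⟩ := integral_add_two_mul_sq_le hρ hρ1 hkl hbm hexp
  calc (∫ x, |ρ x - 1| * |b x| ∂μ) ^ 2 ≤ P * Q :=
        sq_integral_abs_mul_le_integral_div_mul_integral_mul (fun x => by linarith [hρ x])
          (hρint.aemeasurable.add_const 2) (hρint.aemeasurable.sub_const 1) hbm
          (integrable_sq_sub_one_div_add_two hρ hρint) hQint
    _ ≤ 2 * (1 + L) * K := by
        nlinarith [mul_le_mul_of_nonneg_left hQ hP, mul_nonneg (sub_nonneg.2 hP2) hK,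
          mul_nonneg hL (by linarith : 0 ≤ 2 * K - 3 * P)]

end Density

end

theorem weighted_pinsker_inequality_general
    {α : Type*} [MeasurableSpace α] {d : ℕ}
    (ν ν' : Measure α) [IsProbabilityMeasure ν] [IsProbabilityMeasure ν']
    (hac : ν ≪ ν')
    (f : α → EuclideanSpace ℝ (Fin d))
    (hfν : Integrable f ν) (hfν' : Integrable f ν')
    (hexp : Integrable (fun x => Real.exp (‖f x‖ ^ 2)) ν')
    (hent : Integrable (llr ν ν') ν) :
    ‖(∫ x, f x ∂ν) - ∫ x, f x ∂ν'‖ ^ 2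
      ≤ 2 * (1 + Real.log (∫ x, Real.exp (‖f x‖ ^ 2) ∂ν')) * ∫ x, llr ν ν' x ∂ν := by
  have hρ1 : ∫ x, (ν.rnDeriv ν' x).toReal ∂ν' = 1 := by
    simp [Measure.integral_toReal_rnDeriv hac]
  have hH : ∫ x, klFun (ν.rnDeriv ν' x).toReal ∂ν' = ∫ x, llr ν ν' x ∂ν := by
    simp [integral_klFun_rnDeriv hac hent]
  have hpinsker := sq_integral_abs_sub_one_mul_abs_le (fun _ => ENNReal.toReal_nonneg) hρ1
    ((integrable_klFun_rnDeriv_iff hac).2 hent) hfν'.aemeasurable.norm hexp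
  simp only [abs_norm, hH] at hpinsker
  exact (pow_le_pow_left₀ (norm_nonneg _)
    (norm_integral_sub_integral_le_integral_abs_rnDeriv_sub_one hac hfν hfν') 2).trans hpinsker

/-- **Weighted Pinsker inequality.**
The relative entropy `H(ν | ν')` is `∫ log (dν/dν') dν = ∫ llr ν ν' dν` when `ν ≪ ν'`
(and `+∞` otherwise).  With the convention that the right-hand side is `+∞` when
`∫ e^{‖f‖²} dν' = +∞` or `H(ν | ν') = +∞` — in which case the claimed inequality is
trivially true — the statement reduces to the following one, in which both of those
quantities are assumed finite (expressed by the two integrability hypotheses). -/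
theorem weighted_pinsker_inequality
    {α : Type*} [MeasurableSpace α] {d : ℕ}
    (ν ν' : Measure α) [IsProbabilityMeasure ν] [IsProbabilityMeasure ν']
    (hac : ν ≪ ν')
    (f : α → EuclideanSpace ℝ (Fin d)) (hf : Measurable f)
    (hfν : Integrable f ν) (hfν' : Integrable f ν')
    (hexp : Integrable (fun x => Real.exp (‖f x‖ ^ 2)) ν')
    (hent : Integrable (llr ν ν') ν) :
    ‖(∫ x, f x ∂ν) - ∫ x, f x ∂ν'‖ ^ 2
      ≤ 2 * (1 + Real.log (∫ x, Real.exp (‖f x‖ ^ 2) ∂ν')) * ∫ x, llr ν ν' x ∂ν :=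
  weighted_pinsker_inequality_general ν ν' hac f hfν hfν' hexp hent
end

section
/- Let d ≥ 1, T > 0, and let p, q ∈ (2,∞) satisfy d/p + 2/q < 1. There exists a constant C depending only on d, p, q, T such that for every measurable f : [0,T] × ℝ^d → ℝ with ‖f‖_{L^q_t L^p_x} < ∞ and every t ∈ (0,T], ∫_0^t ∫_{ℝ^d} |f(s,x)|² (2πs)^{−d/2} e^{−‖x‖²/(2s)} dx ds ≤ C t^{1 − 2/q − d/p} ‖f‖²_{L^q_t L^p_x}. -/
/-
Hölder's inequality, applied twice. In space, with exponents `p/2` and `p/(p-2)`,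
`∫ |f(s,x)|² g_s(x) dx ≤ ‖f(s,·)‖²_p ‖g_s‖_{p/(p-2)}` for the heat kernel `g_s`, and a Gaussian
integral gives `‖g_s‖_{p/(p-2)} = c s^{-d/p}`. In time, with exponents `q/2` and `q/(q-2)`,
`∫_0^t ‖f(s,·)‖²_p s^{-d/p} ds` is bounded by `‖f‖²_{L^q_t L^p_x}` times
`(∫_0^t s^{-(d/p) q/(q-2)} ds)^{(q-2)/q}`; the condition `d/p + 2/q < 1` is exactly the
integrability of this power at `0`, and the integral produces `t^{1-2/q-d/p}`.
-/

open MeasureTheory Set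
open scoped ENNReal NNReal

/-- The mixed norm `‖f‖_{L^q_t L^p_x} = (∫_0^T ‖f(t,·)‖_{L^p(ℝ^d)}^q dt)^{1/q}`. -/
noncomputable def mixedNorm {E : Type*} [NormedAddCommGroup E] {d : ℕ}
    (T p q : ℝ) (f : ℝ → EuclideanSpace ℝ (Fin d) → E) : ℝ≥0∞ :=
  (∫⁻ t in Ioc (0:ℝ) T,
    ((∫⁻ x, (‖f t x‖₊ : ℝ≥0∞) ^ p) ^ (1 / p)) ^ q) ^ (1 / q)

open Real

theorem lintegral_sq_mul_le {α : Type*} [MeasurableSpace α] {μ : Measure α} {p : ℝ}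
    (hp : 2 < p) {g w : α → ℝ≥0∞} (hg : AEMeasurable g μ) (hw : AEMeasurable w μ) :
    ∫⁻ x, g x ^ 2 * w x ∂μ
      ≤ ((∫⁻ x, g x ^ p ∂μ) ^ (1 / p)) ^ 2
        * (∫⁻ x, w x ^ (p / (p - 2)) ∂μ) ^ ((p - 2) / p) := by
  have hconj : (p / 2).HolderConjugate (p / (p - 2)) :=
    Real.holderConjugate_iff.mpr ⟨by linarith, by field_simp; ring⟩
  have h := ENNReal.lintegral_mul_le_Lp_mul_Lq μ hconj (hg.pow_const (2 : ℝ)) hw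
  have hpow : ∀ x, (g x ^ (2 : ℝ)) ^ (p / 2) = g x ^ p := fun x => by
    rw [← ENNReal.rpow_mul, mul_div_cancel₀ _ two_ne_zero]
  simp only [Pi.mul_apply, hpow] at h
  simp only [ENNReal.rpow_two, one_div_div] at h
  rwa [← ENNReal.rpow_two, ← ENNReal.rpow_mul, one_div_mul_eq_div]

theorem mul_div_sub_two_lt_one {q a : ℝ} (hq : 2 < q) (ha : a < 1 - 2 / q) :
    a * (q / (q - 2)) < 1 := by
  have hq2 : 0 < q - 2 := by linarith
  rw [← lt_div_iff₀ (by positivity), one_div_div, sub_div, div_self (by positivity)]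
  exact ha

theorem lintegral_Ioc_ofReal_rpow {b t : ℝ} (hb : -1 < b) (ht : 0 ≤ t) :
    ∫⁻ s in Ioc 0 t, ENNReal.ofReal (s ^ b) = ENNReal.ofReal (t ^ (b + 1) / (b + 1)) := by
  have hint : IntegrableOn (fun s : ℝ => s ^ b) (Ioc 0 t) := by
    rw [← intervalIntegrable_iff_integrableOn_Ioc_of_le ht]
    exact intervalIntegral.intervalIntegrable_rpow' hb
  rw [← ofReal_integral_eq_lintegral_ofReal hint
      ((ae_restrict_iff' measurableSet_Ioc).mpr (.of_forall fun s hs => rpow_nonneg hs.1.le _)),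
    ← intervalIntegral.integral_of_le ht, integral_rpow (Or.inl hb),
    zero_rpow (by linarith : b + 1 ≠ 0), sub_zero]

theorem setLIntegral_sq_mul_rpow_neg_le {q a t : ℝ} (hq : 2 < q) (ha : a < 1 - 2 / q)
    (ht : 0 ≤ t) {G : ℝ → ℝ≥0∞} (hG : AEMeasurable G (volume.restrict (Ioc 0 t))) :
    ∫⁻ s in Ioc 0 t, G s ^ 2 * ENNReal.ofReal (s ^ (-a))
      ≤ ((∫⁻ s in Ioc 0 t, G s ^ q) ^ (1 / q)) ^ 2
        * ENNReal.ofReal ((1 - a * (q / (q - 2))) ^ (-((q - 2) / q)) * t ^ (1 - 2 / q - a)) := by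
  have hq2 : 0 < q - 2 := by linarith
  have hb := sub_pos.mpr (mul_div_sub_two_lt_one hq ha)
  have hw : ∀ s ∈ Ioc (0 : ℝ) t,
      ENNReal.ofReal (s ^ (-a)) ^ (q / (q - 2)) = ENNReal.ofReal (s ^ (-(a * (q / (q - 2))))) := by
    intro s hs
    rw [ENNReal.ofReal_rpow_of_nonneg (rpow_nonneg hs.1.le _) (by positivity),
      ← rpow_mul hs.1.le, neg_mul]
  calc ∫⁻ s in Ioc 0 t, G s ^ 2 * ENNReal.ofReal (s ^ (-a))
      ≤ _ := lintegral_sq_mul_le hq hG (by fun_prop)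
    _ = _ := by
      rw [setLIntegral_congr_fun measurableSet_Ioc hw,
        lintegral_Ioc_ofReal_rpow (by linarith) ht, neg_add_eq_sub,
        ENNReal.ofReal_rpow_of_nonneg (by positivity) (by positivity),
        div_rpow (by positivity) hb.le, ← rpow_mul ht, rpow_neg hb.le,
        ← div_eq_inv_mul]
      congr 3
      field_simp

section HeatKernel

variable {V : Type*} [NormedAddCommGroup V] [InnerProductSpace ℝ V]

noncomputable def heatKernel (s : ℝ) (x : V) : ℝ :=
  (2 * π * s) ^ (-(Module.finrank ℝ V : ℝ) / 2) * exp (-‖x‖ ^ 2 / (2 * s))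

variable [FiniteDimensional ℝ V] [MeasurableSpace V] [BorelSpace V]

theorem lintegral_ofReal_exp_neg_mul_sq_norm {b : ℝ} (hb : 0 < b) :
    ∫⁻ x : V, ENNReal.ofReal (exp (-b * ‖x‖ ^ 2))
      = ENNReal.ofReal ((π / b) ^ (Module.finrank ℝ V / 2 : ℝ)) := by
  have hI := GaussianFourier.integral_rexp_neg_mul_sq_norm (V := V) hb
  rw [← hI, ofReal_integral_eq_lintegral_ofReal]
  · exact Integrable.of_integral_ne_zero (by rw [hI]; positivity)
  · exact Filter.Eventually.of_forall fun x => (exp_pos _).le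

theorem lintegral_heatKernel_rpow {s r : ℝ} (hs : 0 < s) (hr : 0 < r) :
    ∫⁻ x : V, ENNReal.ofReal (heatKernel s x) ^ r
      = ENNReal.ofReal (r ^ (-(Module.finrank ℝ V : ℝ) / 2)
          * (2 * π * s) ^ (-(r - 1) * Module.finrank ℝ V / 2)) := by
  have h2πs : 0 < 2 * π * s := by positivity
  have hpt : ∀ x : V, ENNReal.ofReal (heatKernel s x) ^ r
      = ENNReal.ofReal ((2 * π * s) ^ (-(Module.finrank ℝ V : ℝ) * r / 2))
        * ENNReal.ofReal (exp (-(r / (2 * s)) * ‖x‖ ^ 2)) := by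
    intro x
    rw [heatKernel, ENNReal.ofReal_rpow_of_nonneg (by positivity) hr.le,
      mul_rpow (by positivity) (exp_pos _).le, ← rpow_mul h2πs.le, ← exp_mul,
      ENNReal.ofReal_mul (by positivity)]
    congr 3 <;> ring
  simp_rw [hpt]
  rw [lintegral_const_mul' _ _ ENNReal.ofReal_ne_top,
    lintegral_ofReal_exp_neg_mul_sq_norm (by positivity), ← ENNReal.ofReal_mul (by positivity)]
  congr 1
  rw [show π / (r / (2 * s)) = 2 * π * s * r⁻¹ by field_simp,
    mul_rpow h2πs.le (by positivity),
    inv_rpow hr.le, ← rpow_neg hr.le, ← mul_assoc, ← rpow_add h2πs, mul_comm]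
  congr 2 <;> ring

theorem lintegral_sq_mul_heatKernel_le {p s : ℝ} (hp : 2 < p) (hs : 0 < s) {g : V → ℝ}
    (hg : AEMeasurable g) :
    ∫⁻ x, ENNReal.ofReal (g x ^ 2 * heatKernel s x)
      ≤ ((∫⁻ x, ‖g x‖ₑ ^ p) ^ (1 / p)) ^ 2
        * ENNReal.ofReal ((p / (p - 2)) ^ (-(Module.finrank ℝ V : ℝ) / 2 * ((p - 2) / p))
          * (2 * π) ^ (-(Module.finrank ℝ V : ℝ) / p)
          * s ^ (-(Module.finrank ℝ V : ℝ) / p)) := by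
  have hp2 : 0 < p - 2 := by linarith
  have hsq : ∀ y : ℝ, ENNReal.ofReal (y ^ 2) = ‖y‖ₑ ^ 2 := fun y => by
    rw [Real.enorm_eq_ofReal_abs, ← ENNReal.ofReal_pow (abs_nonneg y), sq_abs]
  have hk : Measurable fun x : V => ENNReal.ofReal (heatKernel s x) := by
    unfold heatKernel; fun_prop
  calc ∫⁻ x, ENNReal.ofReal (g x ^ 2 * heatKernel s x)
      = ∫⁻ x, ‖g x‖ₑ ^ 2 * ENNReal.ofReal (heatKernel s x) := by
        simp_rw [ENNReal.ofReal_mul (sq_nonneg _), hsq]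
    _ ≤ _ := lintegral_sq_mul_le hp hg.enorm hk.aemeasurable
    _ = _ := by
        have hexp : -(p / (p - 2) - 1) * (Module.finrank ℝ V : ℝ) / 2 * ((p - 2) / p)
            = -(Module.finrank ℝ V : ℝ) / p := by
          field_simp; ring
        rw [lintegral_heatKernel_rpow hs (by positivity),
          ENNReal.ofReal_rpow_of_nonneg (by positivity) (by positivity),
          mul_rpow (by positivity) (by positivity), ← rpow_mul (by positivity),
          ← rpow_mul (by positivity), hexp, mul_rpow (by positivity) hs.le, mul_assoc]

end HeatKernel

theorem krylov_heat_kernel_estimate_general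
    (d : ℕ) (T p q : ℝ)
    (hp : 2 < p) (hq : 2 < q) (hpq : (d : ℝ) / p + 2 / q < 1) :
    ∃ C : ℝ, 0 < C ∧
      ∀ (f : ℝ → EuclideanSpace ℝ (Fin d) → ℝ),
        Measurable (Function.uncurry f) →
        mixedNorm T p q f < ⊤ →
        ∀ t ∈ Ioc (0:ℝ) T,
          (∫⁻ s in Ioc (0:ℝ) t, ∫⁻ x, ENNReal.ofReal
              ((f s x) ^ 2 *
                ((2 * Real.pi * s) ^ (-(d : ℝ) / 2) *
                  Real.exp (-‖x‖ ^ 2 / (2 * s)))))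
            ≤ ENNReal.ofReal (C * t ^ (1 - 2 / q - (d : ℝ) / p)) *
                (mixedNorm T p q f) ^ 2 := by
  have ha : (d : ℝ) / p < 1 - 2 / q := by linarith
  have hb := sub_pos.mpr (mul_div_sub_two_lt_one hq ha)
  set c₁ : ℝ := (p / (p - 2)) ^ (-(d : ℝ) / 2 * ((p - 2) / p)) * (2 * π) ^ (-(d : ℝ) / p)
  set c₂ : ℝ := (1 - d / p * (q / (q - 2))) ^ (-((q - 2) / q))
  have hc₁ : 0 < c₁ := by positivity
  refine ⟨c₁ * c₂, by positivity, fun f hf _ t ht => ?_⟩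
  set G : ℝ → ℝ≥0∞ := fun s => (∫⁻ x, ‖f s x‖ₑ ^ p) ^ (1 / p)
  have hG : Measurable G :=
    (Measurable.lintegral_prod_right' (hf.enorm.pow_const p)).pow_const _
  have hspace : ∀ s ∈ Ioc (0 : ℝ) t,
      ∫⁻ x, ENNReal.ofReal
          (f s x ^ 2 * ((2 * π * s) ^ (-(d : ℝ) / 2) * exp (-‖x‖ ^ 2 / (2 * s))))
        ≤ ENNReal.ofReal c₁ * (G s ^ 2 * ENNReal.ofReal (s ^ (-((d : ℝ) / p)))) := by
    intro s hs
    have h := lintegral_sq_mul_heatKernel_le hp hs.1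
      (hf.of_uncurry_left (x := s)).aemeasurable
    simp only [heatKernel, finrank_euclideanSpace_fin] at h
    refine h.trans_eq ?_
    rw [ENNReal.ofReal_mul hc₁.le, neg_div]
    simp only [G]
    ring
  have hmixed : ((∫⁻ s in Ioc 0 t, G s ^ q) ^ (1 / q)) ^ 2 ≤ mixedNorm T p q f ^ 2 := by
    show _ ≤ ((∫⁻ s in Ioc 0 T, G s ^ q) ^ (1 / q)) ^ 2
    gcongr
    exact ht.2
  calc _ ≤ ∫⁻ s in Ioc 0 t,
          ENNReal.ofReal c₁ * (G s ^ 2 * ENNReal.ofReal (s ^ (-((d : ℝ) / p)))) :=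
        setLIntegral_mono' measurableSet_Ioc hspace
    _ = ENNReal.ofReal c₁
          * ∫⁻ s in Ioc 0 t, G s ^ 2 * ENNReal.ofReal (s ^ (-((d : ℝ) / p))) :=
        lintegral_const_mul' _ _ ENNReal.ofReal_ne_top
    _ ≤ ENNReal.ofReal c₁ * (((∫⁻ s in Ioc 0 t, G s ^ q) ^ (1 / q)) ^ 2
          * ENNReal.ofReal (c₂ * t ^ (1 - 2 / q - (d : ℝ) / p))) := by
        gcongr
        exact setLIntegral_sq_mul_rpow_neg_le hq ha ht.1.le hG.aemeasurable
    _ ≤ ENNReal.ofReal c₁ * (mixedNorm T p q f ^ 2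
          * ENNReal.ofReal (c₂ * t ^ (1 - 2 / q - (d : ℝ) / p))) := by
        gcongr
    _ = _ := by
        rw [mul_assoc c₁, ENNReal.ofReal_mul hc₁.le]
        ring

/-- **The analytic core of Krylov's estimate**: for `d/p + 2/q < 1` (with `p,q ∈ (2,∞)`)
there is `C = C(d,p,q,T)` such that for every `f` with finite mixed norm and `t ∈ (0,T]`,
`∫_0^t ∫_{ℝ^d} |f(s,x)|² (2πs)^{−d/2} e^{−‖x‖²/(2s)} dx ds
  ≤ C t^{1 − 2/q − d/p} ‖f‖²_{L^q_t L^p_x}`. -/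
theorem krylov_heat_kernel_estimate
    (d : ℕ) (hd : 1 ≤ d) (T p q : ℝ) (hT : 0 < T)
    (hp : 2 < p) (hq : 2 < q) (hpq : (d : ℝ) / p + 2 / q < 1) :
    ∃ C : ℝ, 0 < C ∧
      ∀ (f : ℝ → EuclideanSpace ℝ (Fin d) → ℝ),
        Measurable (Function.uncurry f) →
        mixedNorm T p q f < ⊤ →
        ∀ t ∈ Ioc (0:ℝ) T,
          (∫⁻ s in Ioc (0:ℝ) t, ∫⁻ x, ENNReal.ofReal
              ((f s x) ^ 2 *
                ((2 * Real.pi * s) ^ (-(d : ℝ) / 2) *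
                  Real.exp (-‖x‖ ^ 2 / (2 * s)))))
            ≤ ENNReal.ofReal (C * t ^ (1 - 2 / q - (d : ℝ) / p)) *
                (mixedNorm T p q f) ^ 2 :=
  krylov_heat_kernel_estimate_general d T p q hp hq hpq
end

section
/- Let T > 0, α ∈ (0,1], β > 0, δ ∈ (0,1], H ∈ (0,1], C, C_H, L ≥ 0, and let b : [0,T] × ℝ^d × ℝ^d → ℝ^m satisfy ‖b(t,x,x') − b(s,y,y')‖ ≤ C (‖x−y‖^α + ‖x'−y'‖^α + |t−s|^β) for all s,t ∈ [0,T] and x,y,x',y' ∈ ℝ^d. Let (μ_t)_{t∈[0,T]} be a family of Borel probability measures on ℝ^d such that for all 0 ≤ s ≤ t ≤ T there exists a coupling π_{s,t} of μ_s and μ_t with ∫ ‖z − z'‖ dπ_{s,t}(z,z') ≤ C_H (t−s)^H, and assume z ↦ b(t, Y_t, z) is μ_t-integrable for each t. Let Y : [0,T] → ℝ^d satisfy ‖Y_t − Y_s‖ ≤ L |t−s|^δ. Then for every γ > 0 with γ ≤ min(β, αδ, αH), the function f(t) = ∫_{ℝ^d} b(t, Y_t, z) dμ_t(z) satisfies ‖f(t)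 − f(s)‖ ≤ C' (t−s)^γ for all 0 ≤ s ≤ t ≤ T, where C' depends only on C, C_H, L, T, α, β, δ, H, γ. -/
/-!
Transport the two integrals onto a coupling `π` of `μ_s` and `μ_t`: the difference becomes
`∫ (b(t, Y_t, z') − b(s, Y_s, z)) dπ(z, z')`, which the Hölder bound on `b` controls by
`C (‖Y_t − Y_s‖^α + ∫ ‖z − z'‖^α dπ + (t−s)^β)`. Jensen's inequality for the concave map
`x ↦ x^α` bounds the middle term by `(C_H (t−s)^H)^α`, and each power `(t−s)^e` with `e ≥ γ`
is at most `T^(e−γ) (t−s)^γ`.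
-/

open MeasureTheory Set

namespace Real

lemma rpow_le_one_add {x p : ℝ} (hx : 0 ≤ x) (hp₀ : 0 ≤ p) (hp₁ : p ≤ 1) : x ^ p ≤ 1 + x := by
  rcases le_total x 1 with h | h
  · linarith [rpow_le_one hx h hp₀]
  · linarith [rpow_le_self_of_one_le h hp₁]

lemma rpow_le_mul_rpow_mul_of_le_mul_rpow {u K τ e p : ℝ} (hu : 0 ≤ u) (hK : 0 ≤ K)
    (hτ : 0 ≤ τ) (hp : 0 ≤ p) (h : u ≤ K * τ ^ e) : u ^ p ≤ K ^ p * τ ^ (p * e) :=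
  calc u ^ p ≤ (K * τ ^ e) ^ p := rpow_le_rpow hu h hp
    _ = K ^ p * τ ^ (p * e) := by
      rw [mul_rpow hK (rpow_nonneg hτ e), ← rpow_mul hτ, mul_comm e p]

lemma rpow_le_rpow_sub_mul_rpow {x K γ e : ℝ} (hx : 0 ≤ x) (hxK : x ≤ K) (hγ : 0 < γ)
    (hγe : γ ≤ e) : x ^ e ≤ K ^ (e - γ) * x ^ γ := by
  have hsplit : x ^ e = x ^ (e - γ) * x ^ γ := by
    rw [← rpow_add' hx (by linarith), sub_add_cancel]
  rw [hsplit]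
  gcongr

end Real

namespace MeasureTheory

variable {E : Type*} [NormedAddCommGroup E] [NormedSpace ℝ E]

section

variable {X : Type*} [MeasurableSpace X]

lemma Integrable.rpow_of_le_one {μ : Measure X} [IsFiniteMeasure μ] {g : X → ℝ}
    (hg : Integrable g μ) (hg₀ : 0 ≤ᵐ[μ] g) {p : ℝ} (hp₀ : 0 ≤ p) (hp₁ : p ≤ 1) :
    Integrable (fun x => g x ^ p) μ := by
  refine ((integrable_const 1).add hg).mono' (hg.aemeasurable.pow_const p).aestronglyMeasurable ?_
  filter_upwards [hg₀] with x hx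
  rw [Real.norm_of_nonneg (Real.rpow_nonneg hx p)]
  exact Real.rpow_le_one_add hx hp₀ hp₁

lemma integral_rpow_le_rpow_integral {μ : Measure X} [IsProbabilityMeasure μ] {g : X → ℝ}
    (hg : Integrable g μ) (hg₀ : 0 ≤ᵐ[μ] g) {p : ℝ} (hp₀ : 0 ≤ p) (hp₁ : p ≤ 1) :
    ∫ x, g x ^ p ∂μ ≤ (∫ x, g x ∂μ) ^ p :=
  (Real.concaveOn_rpow hp₀ hp₁).le_map_integral
    (continuous_id.rpow_const fun _ => Or.inr hp₀).continuousOn isClosed_Ici hg₀ hg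
    (hg.rpow_of_le_one hg₀ hp₀ hp₁)

variable {μ ν : Measure X} {π : Measure (X × X)} {f g : X → E}

lemma integral_sub_integral_eq_integral_of_map_eq (hμ : π.map Prod.fst = μ)
    (hν : π.map Prod.snd = ν) (hf : Integrable f μ) (hg : Integrable g ν) :
    ∫ y, g y ∂ν - ∫ x, f x ∂μ = ∫ p, g p.2 - f p.1 ∂π := by
  subst hμ hν
  rw [integral_map measurable_snd.aemeasurable hg.1, integral_map measurable_fst.aemeasurable hf.1]
  exact (integral_sub (hg.comp_measurable measurable_snd) (hf.comp_measurable measurable_fst)).symm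

lemma norm_integral_sub_integral_le_of_map_eq (hμ : π.map Prod.fst = μ)
    (hν : π.map Prod.snd = ν) (hf : Integrable f μ) (hg : Integrable g ν) {h : X × X → ℝ}
    (hh : Integrable h π) (hfg : ∀ᵐ p ∂π, ‖g p.2 - f p.1‖ ≤ h p) :
    ‖∫ y, g y ∂ν - ∫ x, f x ∂μ‖ ≤ ∫ p, h p ∂π := by
  rw [integral_sub_integral_eq_integral_of_map_eq hμ hν hf hg]
  exact norm_integral_le_of_norm_le hh hfg

end

lemma norm_integral_sub_integral_le_of_holder_of_map_eq {X : Type*} [NormedAddCommGroup X]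
    [MeasurableSpace X] {μ ν : Measure X} {π : Measure (X × X)} [IsProbabilityMeasure π]
    {f g : X → E} (hμ : π.map Prod.fst = μ) (hν : π.map Prod.snd = ν) (hf : Integrable f μ)
    (hg : Integrable g ν) (hcost : Integrable (fun p : X × X => ‖p.1 - p.2‖) π)
    {C a c α : ℝ} (hC : 0 ≤ C) (hα₀ : 0 ≤ α) (hα₁ : α ≤ 1)
    (hfg : ∀ x y, ‖g y - f x‖ ≤ C * (a + ‖x - y‖ ^ α + c)) :
    ‖∫ y, g y ∂ν - ∫ x, f x ∂μ‖ ≤ C * (a + (∫ p, ‖p.1 - p.2‖ ∂π) ^ α + c) := by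
  have hcost₀ : 0 ≤ᵐ[π] fun p : X × X => ‖p.1 - p.2‖ := ae_of_all _ fun _ => norm_nonneg _
  have hcostα := hcost.rpow_of_le_one hcost₀ hα₀ hα₁
  have hsum : Integrable (fun p : X × X => a + ‖p.1 - p.2‖ ^ α) π :=
    (integrable_const a).add hcostα
  calc ‖∫ y, g y ∂ν - ∫ x, f x ∂μ‖
      ≤ ∫ p, C * (a + ‖p.1 - p.2‖ ^ α + c) ∂π :=
        norm_integral_sub_integral_le_of_map_eq hμ hν hf hg
          ((hsum.add (integrable_const c)).const_mul C)
          (ae_of_all _ fun p => hfg p.1 p.2)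
    _ = C * (a + ∫ p, ‖p.1 - p.2‖ ^ α ∂π + c) := by
        rw [integral_const_mul, integral_add hsum (integrable_const c),
          integral_add (integrable_const a) hcostα]
        simp
    _ ≤ C * (a + (∫ p, ‖p.1 - p.2‖ ∂π) ^ α + c) := by
        gcongr
        exact integral_rpow_le_rpow_integral hcost hcost₀ hα₀ hα₁

end MeasureTheory

theorem drift_time_regularity_general
    (d m : ℕ) (T α β δ H C CH L γ : ℝ)
    (hα : α ∈ Ioc (0:ℝ) 1) (hC : 0 ≤ C) (hCH : 0 ≤ CH) (hL : 0 ≤ L)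
    (hγ0 : 0 < γ) (hγβ : γ ≤ β) (hγδ : γ ≤ α * δ) (hγH : γ ≤ α * H) :
    ∃ C' : ℝ,
      ∀ (b : ℝ → EuclideanSpace ℝ (Fin d) → EuclideanSpace ℝ (Fin d) →
          EuclideanSpace ℝ (Fin m)),
        (∀ s ∈ Icc (0:ℝ) T, ∀ t ∈ Icc (0:ℝ) T,
          ∀ (x y x' y' : EuclideanSpace ℝ (Fin d)),
            ‖b t x x' - b s y y'‖
              ≤ C * (‖x - y‖ ^ α + ‖x' - y'‖ ^ α + |t - s| ^ β)) →
      ∀ (μ : ℝ → Measure (EuclideanSpace ℝ (Fin d))),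
        (∀ t, IsProbabilityMeasure (μ t)) →
        (∀ s t, 0 ≤ s → s ≤ t → t ≤ T →
          ∃ π : Measure (EuclideanSpace ℝ (Fin d) × EuclideanSpace ℝ (Fin d)),
            IsProbabilityMeasure π ∧
            π.map Prod.fst = μ s ∧ π.map Prod.snd = μ t ∧
            Integrable (fun p => ‖p.1 - p.2‖) π ∧
            ∫ p, ‖p.1 - p.2‖ ∂π ≤ CH * (t - s) ^ H) →
      ∀ (Y : ℝ → EuclideanSpace ℝ (Fin d)),
        (∀ s ∈ Icc (0:ℝ) T, ∀ t ∈ Icc (0:ℝ) T, ‖Y t - Y s‖ ≤ L * |t - s| ^ δ) →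
        (∀ t ∈ Icc (0:ℝ) T, Integrable (fun z => b t (Y t) z) (μ t)) →
        ∀ s ∈ Icc (0:ℝ) T, ∀ t ∈ Icc (0:ℝ) T, s ≤ t →
          ‖(∫ z, b t (Y t) z ∂(μ t)) - ∫ z, b s (Y s) z ∂(μ s)‖
            ≤ C' * (t - s) ^ γ := by
  refine ⟨C * (L ^ α * T ^ (α * δ - γ) + CH ^ α * T ^ (α * H - γ) + T ^ (β - γ)), ?_⟩
  intro b hb μ _ hcoupling Y hY hint s hs t ht hst
  obtain ⟨π, hπ, hμs, hμt, hcost, hcostH⟩ := hcoupling s t hs.1 hst ht.2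
  have hτ : 0 ≤ t - s := sub_nonneg.2 hst
  have hτT : t - s ≤ T := by linarith [hs.1, ht.2]
  have hYα : ‖Y t - Y s‖ ^ α ≤ L ^ α * (t - s) ^ (α * δ) := by
    refine Real.rpow_le_mul_rpow_mul_of_le_mul_rpow (norm_nonneg _) hL hτ hα.1.le ?_
    simpa only [abs_of_nonneg hτ] using hY s hs t ht
  have hcostα : (∫ p, ‖p.1 - p.2‖ ∂π) ^ α ≤ CH ^ α * (t - s) ^ (α * H) :=
    Real.rpow_le_mul_rpow_mul_of_le_mul_rpow (integral_nonneg fun _ => norm_nonneg _) hCH hτ hα.1.le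
      hcostH
  have hdrift := norm_integral_sub_integral_le_of_holder_of_map_eq hμs hμt (hint s hs) (hint t ht)
    hcost hC hα.1.le hα.2 (a := ‖Y t - Y s‖ ^ α) (c := (t - s) ^ β) fun z z' => by
      simpa only [norm_sub_rev z' z, abs_of_nonneg hτ] using hb s hs t ht (Y t) (Y s) z' z
  have hpow {e : ℝ} (he : γ ≤ e) := Real.rpow_le_rpow_sub_mul_rpow hτ hτT hγ0 he
  calc _ ≤ C * (L ^ α * (t - s) ^ (α * δ) + CH ^ α * (t - s) ^ (α * H) + (t - s) ^ β) := by
        refine hdrift.trans ?_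
        gcongr
    _ ≤ C * (L ^ α * (T ^ (α * δ - γ) * (t - s) ^ γ) + CH ^ α * (T ^ (α * H - γ) * (t - s) ^ γ)
          + T ^ (β - γ) * (t - s) ^ γ) := by
        gcongr
        exacts [hpow hγδ, hpow hγH, hpow hγβ]
    _ = _ := by ring

/-- Time regularity of `t ↦ ∫ b(t, Y_t, z) dμ_t(z)`: if `b` is `α`-Hölder in space and
`β`-Hölder in time, the marginals `(μ_t)` admit couplings with transport cost
`≤ C_H (t−s)^H`, and `Y` is `δ`-Hölder with constant `L`, then for every
`γ ≤ min(β, αδ, αH)` the drift is `γ`-Hölder with a constant `C'` depending only on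
`C, C_H, L, T, α, β, δ, H, γ`. -/
theorem drift_time_regularity
    (d m : ℕ) (T α β δ H C CH L γ : ℝ)
    (hT : 0 < T) (hα : α ∈ Ioc (0:ℝ) 1) (hβ : 0 < β) (hδ : δ ∈ Ioc (0:ℝ) 1)
    (hH : H ∈ Ioc (0:ℝ) 1) (hC : 0 ≤ C) (hCH : 0 ≤ CH) (hL : 0 ≤ L)
    (hγ0 : 0 < γ) (hγβ : γ ≤ β) (hγδ : γ ≤ α * δ) (hγH : γ ≤ α * H) :
    ∃ C' : ℝ,
      ∀ (b : ℝ → EuclideanSpace ℝ (Fin d) → EuclideanSpace ℝ (Fin d) →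
          EuclideanSpace ℝ (Fin m)),
        (∀ s ∈ Icc (0:ℝ) T, ∀ t ∈ Icc (0:ℝ) T,
          ∀ (x y x' y' : EuclideanSpace ℝ (Fin d)),
            ‖b t x x' - b s y y'‖
              ≤ C * (‖x - y‖ ^ α + ‖x' - y'‖ ^ α + |t - s| ^ β)) →
      ∀ (μ : ℝ → Measure (EuclideanSpace ℝ (Fin d))),
        (∀ t, IsProbabilityMeasure (μ t)) →
        (∀ s t, 0 ≤ s → s ≤ t → t ≤ T →
          ∃ π : Measure (EuclideanSpace ℝ (Fin d) × EuclideanSpace ℝ (Fin d)),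
            IsProbabilityMeasure π ∧
            π.map Prod.fst = μ s ∧ π.map Prod.snd = μ t ∧
            Integrable (fun p => ‖p.1 - p.2‖) π ∧
            ∫ p, ‖p.1 - p.2‖ ∂π ≤ CH * (t - s) ^ H) →
      ∀ (Y : ℝ → EuclideanSpace ℝ (Fin d)),
        (∀ s ∈ Icc (0:ℝ) T, ∀ t ∈ Icc (0:ℝ) T, ‖Y t - Y s‖ ≤ L * |t - s| ^ δ) →
        (∀ t ∈ Icc (0:ℝ) T, Integrable (fun z => b t (Y t) z) (μ t)) →
        ∀ s ∈ Icc (0:ℝ) T, ∀ t ∈ Icc (0:ℝ) T, s ≤ t →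
          ‖(∫ z, b t (Y t) z ∂(μ t)) - ∫ z, b s (Y s) z ∂(μ s)‖
            ≤ C' * (t - s) ^ γ :=
  drift_time_regularity_general d m T α β δ H C CH L γ hα hC hCH hL hγ0 hγβ hγδ hγH
end

section
/- Let H ∈ (1/2,1), ε ∈ (0, 3/2−H) with γ := H − 1/2 + ε ≤ 1, and T > 0. There is a constant C depending only on H and ε such that for every s ∈ (0,T] and every continuous u : [0,T] → ℝ^d whose restriction to [0,s] is γ-Hölder, the quantity K(s) := s^{1/2−H} u(s)/Γ(3/2−H) + ((H−1/2)/Γ(3/2−H)) s^{H−1/2} ∫_0^s (s^{1/2−H} u(s) − r^{1/2−H} u(r)) (s−r)^{−H−1/2} dr satisfies ‖K(s)‖ ≤ C (s^{1/2−H} sup_{0≤r≤s} ‖u(r)‖ + s^{ε} [u]_{γ;[0,s]}). -/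
/-!
With `b = H - 1/2`, split
`s^{-b} u(s) - r^{-b} u(r) = s^{-b} (u(s) - u(r)) - (r^{-b} - s^{-b}) u(r)`.
Against the kernel `(s - r)^{-b-1}` the Hölder increment leaves the integrable singularity
`(s - r)^{ε-1}`. For the second part, `r^{-b} - s^{-b}` is at most `r^{-b}` for `r ≤ s/2` and at
most `(s - r) r^{-b} / s` for `r ≥ s/2`, so that part is dominated by
`(s/2)^{-b-1} (r^{-b} + (s - r)^{-b})`. Every resulting integral is an explicit power of `s`, and
after multiplying by `s^b` these powers are exactly `s^ε` and `s^{-b}`.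
-/

open MeasureTheory Set Real

theorem rpow_neg_sub_rpow_neg_le {b r s : ℝ} (hb : b ≤ 1) (hr : 0 < r) (hrs : r ≤ s) :
    r ^ (-b) - s ^ (-b) ≤ (s - r) / s * r ^ (-b) := by
  have hs : 0 < s := hr.trans_le hrs
  have hsplit : s ^ (-b) = (r / s) ^ b * r ^ (-b) := by
    rw [div_rpow hr.le hs.le, rpow_neg hr.le, rpow_neg hs.le]
    field_simp
  have hle : r / s ≤ (r / s) ^ b :=
    self_le_rpow_of_le_one (div_pos hr hs).le ((div_le_one hs).2 hrs) hb
  calc r ^ (-b) - s ^ (-b) = (1 - (r / s) ^ b) * r ^ (-b) := by rw [hsplit]; ring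
    _ ≤ (1 - r / s) * r ^ (-b) := by gcongr
    _ = (s - r) / s * r ^ (-b) := by field_simp

theorem rpow_neg_sub_rpow_neg_mul_rpow_le {b r s : ℝ} (hb₀ : 0 ≤ b) (hb₁ : b ≤ 1)
    (hr : 0 < r) (hrs : r < s) :
    (r ^ (-b) - s ^ (-b)) * (s - r) ^ (-b - 1) ≤
      (s / 2) ^ (-b - 1) * (r ^ (-b) + (s - r) ^ (-b)) := by
  have hs : 0 < s := hr.trans hrs
  have hsr : 0 < s - r := sub_pos.2 hrs
  rcases le_or_gt r (s / 2) with hr₂ | hr₂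
  · have hdiff : r ^ (-b) - s ^ (-b) ≤ r ^ (-b) := sub_le_self _ (rpow_nonneg hs.le _)
    have hker : (s - r) ^ (-b - 1) ≤ (s / 2) ^ (-b - 1) :=
      rpow_le_rpow_of_nonpos (by linarith) (by linarith) (by linarith)
    calc (r ^ (-b) - s ^ (-b)) * (s - r) ^ (-b - 1) ≤ r ^ (-b) * (s / 2) ^ (-b - 1) :=
          mul_le_mul hdiff hker (rpow_nonneg hsr.le _) (rpow_nonneg hr.le _)
      _ ≤ (s / 2) ^ (-b - 1) * (r ^ (-b) + (s - r) ^ (-b)) := by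
          nlinarith [rpow_nonneg hsr.le (-b), rpow_nonneg (by linarith : 0 ≤ s / 2) (-b - 1)]
  · have hr' : r ^ (-b) ≤ (s / 2) ^ (-b) :=
      rpow_le_rpow_of_nonpos (by linarith) hr₂.le (by linarith)
    calc (r ^ (-b) - s ^ (-b)) * (s - r) ^ (-b - 1)
        ≤ (s - r) / s * r ^ (-b) * (s - r) ^ (-b - 1) :=
          mul_le_mul_of_nonneg_right (rpow_neg_sub_rpow_neg_le hb₁ hr hrs.le)
            (rpow_nonneg hsr.le _)
      _ = r ^ (-b) / s * (s - r) ^ (-b) := by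
          rw [rpow_sub_one hsr.ne']
          field_simp
      _ ≤ (s / 2) ^ (-b) / (s / 2) * (s - r) ^ (-b) := by
          gcongr
          linarith
      _ ≤ (s / 2) ^ (-b - 1) * (r ^ (-b) + (s - r) ^ (-b)) := by
          rw [← rpow_sub_one (by positivity)]
          nlinarith [rpow_nonneg hr.le (-b), rpow_nonneg (by linarith : 0 ≤ s / 2) (-b - 1)]

theorem integral_Ioo_rpow {p c : ℝ} (hp : -1 < p) (hc : 0 ≤ c) :
    ∫ r in Ioo 0 c, r ^ p = c ^ (p + 1) / (p + 1) := by
  rw [← integral_Ioc_eq_integral_Ioo, ← intervalIntegral.integral_of_le hc,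
    integral_rpow (Or.inl hp), zero_rpow (by linarith), sub_zero]

theorem integral_Ioo_sub_rpow {p c : ℝ} (hp : -1 < p) (hc : 0 ≤ c) :
    ∫ r in Ioo 0 c, (c - r) ^ p = c ^ (p + 1) / (p + 1) := by
  rw [← integral_Ioc_eq_integral_Ioo, ← intervalIntegral.integral_of_le hc,
    intervalIntegral.integral_comp_sub_left (fun x => x ^ p) c, sub_self, sub_zero,
    integral_rpow (Or.inl hp), zero_rpow (by linarith), sub_zero]

theorem integrableOn_Ioo_sub_rpow {p c : ℝ} (hp : -1 < p) :
    IntegrableOn (fun r => (c - r) ^ p) (Ioo 0 c) := by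
  have h := (intervalIntegral.intervalIntegrable_rpow' (a := 0) (b := c) hp).comp_sub_left c
  rw [sub_zero, sub_self] at h
  exact h.symm.1.mono_set Ioo_subset_Ioc_self

theorem norm_kernel_integrand_le {E : Type*} [NormedAddCommGroup E] [NormedSpace ℝ E]
    {b ε r s S L : ℝ} {x y : E} (hb₀ : 0 ≤ b) (hb₁ : b ≤ 1) (hr : 0 < r) (hrs : r < s)
    (hy : ‖y‖ ≤ S) (hxy : ‖x - y‖ ≤ L * (s - r) ^ (b + ε)) :
    ‖(s - r) ^ (-b - 1) • (s ^ (-b) • x - r ^ (-b) • y)‖ ≤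
      L * s ^ (-b) * (s - r) ^ (ε - 1) +
        S * ((s / 2) ^ (-b - 1) * (r ^ (-b) + (s - r) ^ (-b))) := by
  have hs : 0 < s := hr.trans hrs
  have hsr : 0 < s - r := sub_pos.2 hrs
  have hdiff : 0 ≤ r ^ (-b) - s ^ (-b) :=
    sub_nonneg.2 (rpow_le_rpow_of_nonpos hr hrs.le (by linarith))
  have hsplit :
      s ^ (-b) • x - r ^ (-b) • y = s ^ (-b) • (x - y) - (r ^ (-b) - s ^ (-b)) • y := by
    rw [smul_sub, sub_smul]
    abel
  have hexp : (s - r) ^ (-b - 1) * (s - r) ^ (b + ε) = (s - r) ^ (ε - 1) := by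
    rw [← rpow_add hsr]
    ring_nf
  calc ‖(s - r) ^ (-b - 1) • (s ^ (-b) • x - r ^ (-b) • y)‖
      ≤ (s - r) ^ (-b - 1) * (s ^ (-b) * ‖x - y‖ + (r ^ (-b) - s ^ (-b)) * ‖y‖) := by
        rw [norm_smul, norm_of_nonneg (rpow_nonneg hsr.le _), hsplit]
        gcongr
        refine (norm_sub_le _ _).trans_eq ?_
        rw [norm_smul, norm_smul, norm_of_nonneg (rpow_nonneg hs.le _), norm_of_nonneg hdiff]
    _ ≤ (s - r) ^ (-b - 1) *
          (s ^ (-b) * (L * (s - r) ^ (b + ε)) + (r ^ (-b) - s ^ (-b)) * S) := by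
        gcongr
    _ = L * s ^ (-b) * ((s - r) ^ (-b - 1) * (s - r) ^ (b + ε)) +
          S * ((r ^ (-b) - s ^ (-b)) * (s - r) ^ (-b - 1)) := by ring
    _ ≤ L * s ^ (-b) * (s - r) ^ (ε - 1) +
          S * ((s / 2) ^ (-b - 1) * (r ^ (-b) + (s - r) ^ (-b))) := by
        rw [hexp]
        gcongr _ + S * ?_
        · exact (norm_nonneg y).trans hy
        · exact rpow_neg_sub_rpow_neg_mul_rpow_le hb₀ hb₁ hr hrs

theorem rpow_mul_majorant_integral_eq {b ε s S L : ℝ} (hs : 0 < s) :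
    s ^ b * (L * s ^ (-b) * (s ^ ε / ε) +
        S * ((s / 2) ^ (-b - 1) * (2 * (s ^ (1 - b) / (1 - b))))) =
      L * s ^ ε / ε + 2 ^ (b + 2) / (1 - b) * S * s ^ (-b) := by
  have hhalf : (s / 2) ^ (-b - 1) = 2 ^ (b + 1) * s ^ (-b - 1) := by
    rw [div_rpow hs.le zero_le_two, show -b - 1 = -(b + 1) by ring, rpow_neg zero_le_two]
    field_simp
  have hcancel : s ^ b * s ^ (-b) = 1 := by
    rw [← rpow_add hs, add_neg_cancel, rpow_zero]
  have hcollect : s ^ b * s ^ (-b - 1) * s ^ (1 - b) = s ^ (-b) := by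
    rw [← rpow_add hs, ← rpow_add hs]
    ring_nf
  have htwo : (2 : ℝ) ^ (b + 2) = 2 ^ (b + 1) * 2 := by
    rw [← rpow_add_one two_ne_zero]
    ring_nf
  calc s ^ b * (L * s ^ (-b) * (s ^ ε / ε) +
        S * ((s / 2) ^ (-b - 1) * (2 * (s ^ (1 - b) / (1 - b)))))
      = L * s ^ ε / ε * (s ^ b * s ^ (-b)) +
          2 ^ (b + 1) * 2 / (1 - b) * S * (s ^ b * s ^ (-b - 1) * s ^ (1 - b)) := by
        rw [hhalf]
        ring
    _ = L * s ^ ε / ε + 2 ^ (b + 2) / (1 - b) * S * s ^ (-b) := by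
        rw [hcancel, hcollect, htwo, mul_one]

theorem rpow_mul_norm_integral_kernel_le {E : Type*} [NormedAddCommGroup E] [NormedSpace ℝ E]
    {b ε s S L : ℝ} {u : ℝ → E} (hb₀ : 0 ≤ b) (hb₁ : b < 1) (hε : 0 < ε) (hs : 0 < s)
    (hS : ∀ r ∈ Ioo 0 s, ‖u r‖ ≤ S)
    (hL : ∀ r ∈ Ioo 0 s, ‖u s - u r‖ ≤ L * (s - r) ^ (b + ε)) :
    s ^ b * ‖∫ r in Ioc 0 s, (s - r) ^ (-b - 1) • (s ^ (-b) • u s - r ^ (-b) • u r)‖ ≤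
      L * s ^ ε / ε + 2 ^ (b + 2) / (1 - b) * S * s ^ (-b) := by
  set g : ℝ → ℝ := fun r =>
    L * s ^ (-b) * (s - r) ^ (ε - 1) + S * ((s / 2) ^ (-b - 1) * (r ^ (-b) + (s - r) ^ (-b)))
  have hsing : IntegrableOn (fun r => (s - r) ^ (ε - 1)) (Ioo 0 s) :=
    integrableOn_Ioo_sub_rpow (by linarith)
  have hsym : IntegrableOn (fun r : ℝ => r ^ (-b) + (s - r) ^ (-b)) (Ioo 0 s) :=
    ((intervalIntegral.integrableOn_Ioo_rpow_iff hs).2 (by linarith)).add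
      (integrableOn_Ioo_sub_rpow (by linarith))
  have hg_int : IntegrableOn g (Ioo 0 s) :=
    (hsing.const_mul _).add ((hsym.const_mul _).const_mul _)
  have hg : ∫ r in Ioo 0 s, g r =
      L * s ^ (-b) * (s ^ ε / ε) + S * ((s / 2) ^ (-b - 1) * (2 * (s ^ (1 - b) / (1 - b)))) := by
    simp only [g]
    rw [integral_add (hsing.const_mul _) ((hsym.const_mul _).const_mul _),
      integral_const_mul, integral_const_mul, integral_const_mul,
      integral_add ((intervalIntegral.integrableOn_Ioo_rpow_iff hs).2 (by linarith))
        (integrableOn_Ioo_sub_rpow (by linarith)),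
      integral_Ioo_sub_rpow (by linarith) hs.le, integral_Ioo_rpow (by linarith) hs.le,
      integral_Ioo_sub_rpow (by linarith) hs.le]
    ring_nf
  have hnorm :
      ‖∫ r in Ioc 0 s, (s - r) ^ (-b - 1) • (s ^ (-b) • u s - r ^ (-b) • u r)‖ ≤
      ∫ r in Ioo 0 s, g r := by
    rw [integral_Ioc_eq_integral_Ioo]
    refine norm_integral_le_of_norm_le hg_int ((ae_restrict_iff' measurableSet_Ioo).2 ?_)
    exact Filter.Eventually.of_forall fun r hr =>
      norm_kernel_integrand_le hb₀ hb₁.le hr.1 hr.2 (hS r hr) (hL r hr)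
  calc s ^ b * ‖∫ r in Ioc 0 s, (s - r) ^ (-b - 1) • (s ^ (-b) • u s - r ^ (-b) • u r)‖
      ≤ s ^ b * (L * s ^ (-b) * (s ^ ε / ε) +
          S * ((s / 2) ^ (-b - 1) * (2 * (s ^ (1 - b) / (1 - b))))) := by
        rw [← hg]
        gcongr
    _ = L * s ^ ε / ε + 2 ^ (b + 2) / (1 - b) * S * s ^ (-b) := rpow_mul_majorant_integral_eq hs

theorem norm_fractional_kernel_inverse_le {E : Type*} [NormedAddCommGroup E] [NormedSpace ℝ E]
    {b ε s S L G : ℝ} {u : ℝ → E} (hb₀ : 0 ≤ b) (hb₁ : b < 1) (hε : 0 < ε) (hs : 0 < s)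
    (hG : 0 < G) (hL₀ : 0 ≤ L) (hS : ∀ r ∈ Ioc 0 s, ‖u r‖ ≤ S)
    (hL : ∀ r ∈ Ioo 0 s, ‖u s - u r‖ ≤ L * (s - r) ^ (b + ε)) :
    ‖(s ^ (-b) / G) • u s + (b / G * s ^ b) •
        ∫ r in Ioc 0 s, (s - r) ^ (-b - 1) • (s ^ (-b) • u s - r ^ (-b) • u r)‖ ≤
      ((1 + b * (2 ^ (b + 2) / (1 - b))) / G + b / (G * ε)) * (s ^ (-b) * S + s ^ ε * L) := by
  set c := 2 ^ (b + 2) / (1 - b)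
  have hc : 0 ≤ c := div_nonneg (rpow_nonneg zero_le_two _) (by linarith)
  have hS₀ : 0 ≤ S := (norm_nonneg _).trans (hS s ⟨hs, le_rfl⟩)
  have hI := rpow_mul_norm_integral_kernel_le hb₀ hb₁ hε hs
    (fun r hr => hS r (Ioo_subset_Ioc_self hr)) hL
  calc ‖(s ^ (-b) / G) • u s + (b / G * s ^ b) •
          ∫ r in Ioc 0 s, (s - r) ^ (-b - 1) • (s ^ (-b) • u s - r ^ (-b) • u r)‖
      ≤ s ^ (-b) / G * S + b / G * (s ^ b * ‖∫ r in Ioc 0 s,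
            (s - r) ^ (-b - 1) • (s ^ (-b) • u s - r ^ (-b) • u r)‖) := by
        refine (norm_add_le _ _).trans ?_
        rw [norm_smul, norm_smul, norm_of_nonneg (by positivity), norm_of_nonneg (by positivity),
          mul_assoc]
        gcongr
        exact hS s ⟨hs, le_rfl⟩
    _ ≤ s ^ (-b) / G * S + b / G * (L * s ^ ε / ε + c * S * s ^ (-b)) := by gcongr
    _ = (1 + b * c) / G * (s ^ (-b) * S) + b / (G * ε) * (s ^ ε * L) := by
        field_simp
        ring
    _ ≤ ((1 + b * c) / G + b / (G * ε)) * (s ^ (-b) * S + s ^ ε * L) := by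
        have hX : 0 ≤ s ^ (-b) * S := by positivity
        have hY : 0 ≤ s ^ ε * L := by positivity
        nlinarith [mul_nonneg (by positivity : 0 ≤ (1 + b * c) / G) hY,
          mul_nonneg (by positivity : 0 ≤ b / (G * ε)) hX]

theorem fractional_kernel_inverse_bound_general
    {d : ℕ} (H ε : ℝ) (hH : H ∈ Ioo (1/2:ℝ) 1)
    (hε : 0 < ε) :
    ∃ C : ℝ, ∀ (T : ℝ), 0 < T → ∀ s ∈ Ioc (0:ℝ) T,
      ∀ (u : ℝ → EuclideanSpace ℝ (Fin d)), Continuous u →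
      ∀ S L : ℝ,
        (∀ r ∈ Icc (0:ℝ) s, ‖u r‖ ≤ S) →
        (∀ r ∈ Icc (0:ℝ) s, ∀ t ∈ Icc (0:ℝ) s,
          ‖u t - u r‖ ≤ L * |t - r| ^ (H - 1/2 + ε)) →
        ‖(s ^ ((1/2:ℝ) - H) / Real.Gamma ((3/2:ℝ) - H)) • u s +
              (((H - 1/2) / Real.Gamma ((3/2:ℝ) - H)) * s ^ (H - (1/2:ℝ))) •
                ∫ r in Ioc (0:ℝ) s,
                  ((s - r) ^ (-H - (1/2:ℝ))) •
                    (s ^ ((1/2:ℝ) - H) • u s - r ^ ((1/2:ℝ) - H) • u r)‖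
          ≤ C * (s ^ ((1/2:ℝ) - H) * S + s ^ ε * L) := by
  obtain ⟨hH₁, hH₂⟩ := hH
  set b := H - 1 / 2 with hb
  refine ⟨(1 + b * (2 ^ (b + 2) / (1 - b))) / Gamma (3 / 2 - H) + b / (Gamma (3 / 2 - H) * ε),
    fun T _ s ⟨hs, _⟩ u _ S L hS hL => ?_⟩
  rw [show (1 / 2 : ℝ) - H = -b by ring, show -H - (1 / 2 : ℝ) = -b - 1 by ring]
  have hL₀ : 0 ≤ L := by
    have h := (norm_nonneg _).trans (hL 0 ⟨le_rfl, hs.le⟩ s ⟨hs.le, le_rfl⟩)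
    exact nonneg_of_mul_nonneg_left h (rpow_pos_of_pos (by rwa [sub_zero, abs_of_pos hs]) _)
  refine norm_fractional_kernel_inverse_le (by linarith) (by linarith) hε hs
    (Gamma_pos_of_pos (by linarith)) hL₀ (fun r hr => hS r (Ioc_subset_Icc_self hr)) ?_
  intro r hr
  simpa [abs_of_pos (sub_pos.2 hr.2)] using hL r (Ioo_subset_Icc_self hr) s ⟨hs.le, le_rfl⟩

/-- Bound on the inverse fractional-kernel operator for `H ∈ (1/2,1)`:
with `γ = H − 1/2 + ε ≤ 1`, there is a constant `C` depending only on `H` and `ε`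
(in particular not on `T`) such that for every `s ∈ (0,T]` and continuous `u` which is
`γ`-Hölder on `[0,s]` (with sup bound `S` and Hölder constant `L` on `[0,s]`),
`‖K(s)‖ ≤ C (s^{1/2−H} S + s^ε L)`, where
`K(s) = s^{1/2−H} u(s)/Γ(3/2−H)
  + ((H−1/2)/Γ(3/2−H)) s^{H−1/2} ∫_0^s (s^{1/2−H}u(s) − r^{1/2−H}u(r))(s−r)^{−H−1/2} dr`. -/
theorem fractional_kernel_inverse_bound
    {d : ℕ} (H ε : ℝ) (hH : H ∈ Ioo (1/2:ℝ) 1)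
    (hε : 0 < ε) (hε' : ε < 3/2 - H) (hγ : H - 1/2 + ε ≤ 1) :
    ∃ C : ℝ, ∀ (T : ℝ), 0 < T → ∀ s ∈ Ioc (0:ℝ) T,
      ∀ (u : ℝ → EuclideanSpace ℝ (Fin d)), Continuous u →
      ∀ S L : ℝ,
        (∀ r ∈ Icc (0:ℝ) s, ‖u r‖ ≤ S) →
        (∀ r ∈ Icc (0:ℝ) s, ∀ t ∈ Icc (0:ℝ) s,
          ‖u t - u r‖ ≤ L * |t - r| ^ (H - 1/2 + ε)) →
        ‖(s ^ ((1/2:ℝ) - H) / Real.Gamma ((3/2:ℝ) - H)) • u s +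
              (((H - 1/2) / Real.Gamma ((3/2:ℝ) - H)) * s ^ (H - (1/2:ℝ))) •
                ∫ r in Ioc (0:ℝ) s,
                  ((s - r) ^ (-H - (1/2:ℝ))) •
                    (s ^ ((1/2:ℝ) - H) • u s - r ^ ((1/2:ℝ) - H) • u r)‖
          ≤ C * (s ^ ((1/2:ℝ) - H) * S + s ^ ε * L) :=
  fractional_kernel_inverse_bound_general H ε hH hε
end
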